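/- Let Φ be a locally finite set of points in ℝ² that is (σ,ρ,ν)-ring regulated about the origin, with every point of Φ at distance greater than r₀ from the origin, let ℓ be a path-loss function as in the context, γ₀ > 0 and m > 0. Then for every x ∈ Φ, the SIC decoding delay satisfies D(x, Φ) ≤ m / log₂(1 + η(‖x‖)), where η(r) = (γ₀/ℓ(r) + σ_β + ρ_β r + ν_β r²)^{−1}. -/

import Mathlib

open MeasureTheory Set

noncomputable section

abbrev Plane : Type := EuclideanSpace ℝ (Fin 2)

/-- `Φ` is `(σ,ρ,ν)`-ring regulated about the origin. -/
def RingRegulated (Φ : Set Plane) (σ ρ ν : ℝ) : Prop :=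
  ∀ r R : ℝ, 0 ≤ r → r < R →
    ((Φ ∩ {z : Plane | r < ‖z‖ ∧ ‖z‖ < R}).ncard : ℝ)
      ≤ σ + ρ * (R - r) + ν * (R ^ 2 - r ^ 2)

/-- The tail interference at the origin from points of `Φ` at distance greater than `r`. -/
def tailInterference (ℓ : ℝ → ℝ) (Φ : Set Plane) (r : ℝ) : ℝ :=
  ∑' w : {w : Plane // w ∈ Φ ∧ r < ‖w‖}, ℓ ‖(w : Plane)‖

/-- The signal-to-residual-interference-plus-noise ratio of the transmitter at `x`
with respect to the receiver at the origin, under successive interference cancellation. -/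
def SrINR (ℓ : ℝ → ℝ) (γ₀ : ℝ) (Φ : Set Plane) (x : Plane) : ℝ :=
  ℓ ‖x‖ / (tailInterference ℓ Φ ‖x‖ + γ₀)

/-- The deterministic lower bound `η(r)` on the SrINR at distance `r`. -/
def eta (ℓ : ℝ → ℝ) (γ₀ σβ ρβ νβ : ℝ) (r : ℝ) : ℝ :=
  (γ₀ / ℓ r + σβ + ρβ * r + νβ * r ^ 2)⁻¹

/-- The rate of the link from `x` to the typical receiver at the origin:
the infimum over the transmitters `w ∈ Φ` with `‖w‖ ≤ ‖x‖` of `log₂(1 + SrINR(w,Φ))`. -/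
def rate (ℓ : ℝ → ℝ) (γ₀ : ℝ) (Φ : Set Plane) (x : Plane) : ℝ :=
  sInf ((fun w => Real.logb 2 (1 + SrINR ℓ γ₀ Φ w)) '' {w ∈ Φ | ‖w‖ ≤ ‖x‖})

/-- The virtual decoding delay of a message of `m` bits from `x` to the typical receiver. -/
def vDelay (ℓ : ℝ → ℝ) (γ₀ m : ℝ) (Φ : Set Plane) (x : Plane) : ℝ :=
  m / rate ℓ γ₀ Φ x

/-- The SIC decoding delay from `x` to the typical receiver: the supremum of the virtual
decoding delays over the transmitters `w ∈ Φ` with higher received power, i.e. `‖w‖ ≤ ‖x‖`. -/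
def sicDelay (ℓ : ℝ → ℝ) (γ₀ m : ℝ) (Φ : Set Plane) (x : Plane) : ℝ :=
  sSup ((fun w => vDelay ℓ γ₀ m Φ w) '' {w ∈ Φ | ‖w‖ ≤ ‖x‖})


/-!
Ring regulation about the origin bounds the number of points of `Φ` with `r < ‖w‖ ≤ t` by
`F t = σ + ρ (t - r) + ν (t² - r²)`. Summation by parts against `ℓ t ≤ C t^(-β)` then bounds the
residual interference beyond `r` by `σ ℓ(r) + ∫ᵣ^∞ C t^(-β) F'(t) dt`, and the lower bound
`C' r^(-β) ≤ ℓ(r)` turns the integral into `ℓ(r) (ρ_β r + ν_β r²)`. Hence `SrINR(w, Φ) ≥ η(‖w‖)`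
for every `w ∈ Φ`; as `η` decreases with the distance, every transmitter `w` with `‖w‖ ≤ ‖x‖`
has rate at least `log₂(1 + η(‖x‖))`.
-/

open Finset in
/-- Summation by parts; the slack `(F b - #S) ℓ b ≥ 0` is what lets the induction remove the
farthest point. -/
theorem sum_add_mul_le_of_card_filter_le {ι : Type*} [DecidableEq ι] (S : Finset ι) (f : ι → ℝ)
    {ℓ F W : ℝ → ℝ} {r : ℝ} (hℓ : AntitoneOn ℓ (Ici r)) (hFr : 0 ≤ F r)
    (hFW : ∀ a b, r ≤ a → a ≤ b → (F b - F a) * ℓ b ≤ W a - W b)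
    (hS : ∀ x ∈ S, r < f x) (hcard : ∀ t, r < t → (#(S.filter (f · ≤ t)) : ℝ) ≤ F t)
    {b : ℝ} (hrb : r ≤ b) (hb : ∀ x ∈ S, f x ≤ b) :
    ∑ x ∈ S, ℓ (f x) + (F b - #S) * ℓ b ≤ F r * ℓ r + W r - W b := by
  induction S using Finset.induction_on_max_value f generalizing b with
  | empty =>
    have hℓb : F r * ℓ b ≤ F r * ℓ r := mul_le_mul_of_nonneg_left (hℓ self_mem_Ici hrb hrb) hFr
    simp only [sum_empty, Finset.card_empty, Nat.cast_zero, sub_zero, zero_add]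
    linarith [hFW r b le_rfl hrb]
  | insert a s ha has ih =>
    have hra : r < f a := hS a (mem_insert_self a s)
    have hab : f a ≤ b := hb a (mem_insert_self a s)
    have hcard_s : ∀ t, r < t → (#(s.filter (f · ≤ t)) : ℝ) ≤ F t := fun t ht =>
      (Nat.cast_le.2 (Finset.card_le_card (filter_subset_filter _ (subset_insert a s)))).trans
        (hcard t ht)
    have IH := ih (fun x hx => hS x (mem_insert_of_mem hx)) hcard_s hra.le has
    have hcount : (#s : ℝ) + 1 ≤ F (f a) := by
      have := hcard (f a) hra
      rwa [filter_true_of_mem (fun x hx => (mem_insert.1 hx).elim (fun h => h ▸ le_rfl) (has x)),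
        card_insert_of_notMem ha, Nat.cast_succ] at this
    have hℓab : (F (f a) - #s - 1) * (ℓ b - ℓ (f a)) ≤ 0 :=
      mul_nonpos_of_nonneg_of_nonpos (by linarith) (by linarith [hℓ hra.le (hra.le.trans hab) hab])
    rw [sum_insert ha, card_insert_of_notMem ha, Nat.cast_succ]
    nlinarith [hFW (f a) b hra.le hab]

open Finset in
theorem sum_le_of_card_filter_le {ι : Type*} (S : Finset ι) (f : ι → ℝ)
    {ℓ F W : ℝ → ℝ} {r : ℝ} (hℓ : AntitoneOn ℓ (Ici r)) (hℓ0 : ∀ t, 0 ≤ ℓ t) (hFr : 0 ≤ F r)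
    (hW : ∀ t, r ≤ t → 0 ≤ W t)
    (hFW : ∀ a b, r ≤ a → a ≤ b → (F b - F a) * ℓ b ≤ W a - W b)
    (hS : ∀ x ∈ S, r < f x) (hcard : ∀ t, r < t → (#(S.filter (f · ≤ t)) : ℝ) ≤ F t) :
    ∑ x ∈ S, ℓ (f x) ≤ F r * ℓ r + W r := by
  classical
  rcases S.eq_empty_or_nonempty with rfl | hne
  · simpa using add_nonneg (mul_nonneg hFr (hℓ0 r)) (hW r le_rfl)
  obtain ⟨a, ha, hmax⟩ := S.exists_max_image f hne
  have hra : r < f a := hS a ha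
  have hcount : (#S : ℝ) ≤ F (f a) := by
    simpa [filter_true_of_mem hmax] using hcard (f a) hra
  have := sum_add_mul_le_of_card_filter_le S f hℓ hFr hFW hS hcard hra.le hmax
  nlinarith [mul_nonneg (sub_nonneg.2 hcount) (hℓ0 (f a)), hW (f a) hra.le]

/-- `∫ₜ^∞ C s^(-β) (ρ + 2 ν s) ds`: the power-law path-loss bound integrated against the
derivative `ρ + 2 ν s` of the ring-regulation budget. -/
def annulusTail (C β ρ ν t : ℝ) : ℝ :=
  C * ρ / (β - 1) * t ^ (1 - β) + 2 * C * ν / (β - 2) * t ^ (2 - β)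

section annulusTail

variable {C β ρ ν : ℝ}

theorem annulusTail_eq {t : ℝ} (ht : 0 < t) :
    annulusTail C β ρ ν t = C * t ^ (-β) * (ρ / (β - 1) * t + 2 * ν / (β - 2) * t ^ 2) := by
  have h1 : t ^ (1 - β) = t ^ (-β) * t := by rw [← Real.rpow_add_one ht.ne']; ring_nf
  have h2 : t ^ (2 - β) = t ^ (-β) * t ^ 2 := by
    rw [sq, ← mul_assoc, ← Real.rpow_add_one ht.ne', ← Real.rpow_add_one ht.ne']; ring_nf
  rw [annulusTail, h1, h2]
  field_simp

theorem annulusTail_nonneg (hβ : 2 < β) (hC : 0 ≤ C) (hρ : 0 ≤ ρ) (hν : 0 ≤ ν) {t : ℝ}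
    (ht : 0 < t) : 0 ≤ annulusTail C β ρ ν t := by
  have : 0 < β - 1 := by linarith
  have : 0 < β - 2 := by linarith
  rw [annulusTail_eq ht]
  positivity

theorem hasDerivAt_annulusTail (hβ : 2 < β) {t : ℝ} (ht : 0 < t) :
    HasDerivAt (annulusTail C β ρ ν) (-(C * t ^ (-β) * (ρ + 2 * ν * t))) t := by
  have h1 := (Real.hasDerivAt_rpow_const (p := 1 - β) (Or.inl ht.ne')).const_mul (C * ρ / (β - 1))
  have h2 := (Real.hasDerivAt_rpow_const (p := 2 - β) (Or.inl ht.ne')).const_mul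
    (2 * C * ν / (β - 2))
  refine (h1.add h2).congr_deriv ?_
  have e1 : (1 - β - 1) = -β := by ring
  have e2 : t ^ (2 - β - 1) = t ^ (-β) * t := by rw [← Real.rpow_add_one ht.ne']; ring_nf
  rw [e1, e2]
  field_simp [(by linarith : β - 1 ≠ 0), (by linarith : β - 2 ≠ 0)]
  ring

/-- `L (F b - F a) ≤ ∫ₐᵇ C t^(-β) F'(t) dt` for `F t = ρ t + ν t²`,
since `L ≤ C t^(-β)` on `[a, b]`. -/
theorem mul_sub_le_annulusTail_sub (hβ : 2 < β) (hC : 0 ≤ C) (hρ : 0 ≤ ρ) (hν : 0 ≤ ν)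
    {a b L : ℝ} (ha : 0 < a) (hab : a ≤ b) (hL : L ≤ C * b ^ (-β)) :
    L * (ρ * (b - a) + ν * (b ^ 2 - a ^ 2)) ≤ annulusTail C β ρ ν a - annulusTail C β ρ ν b := by
  let H : ℝ → ℝ := fun t => annulusTail C β ρ ν t + L * (ρ * t + ν * t ^ 2)
  have hH : ∀ t, 0 < t →
      HasDerivAt H ((L - C * t ^ (-β)) * (ρ + 2 * ν * t)) t := fun t ht => by
    refine ((hasDerivAt_annulusTail hβ ht).add ((((hasDerivAt_id t).const_mul ρ).add
      ((hasDerivAt_pow 2 t).const_mul ν)).const_mul L)).congr_deriv ?_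
    push_cast
    ring
  have hanti : AntitoneOn H (Icc a b) := by
    refine antitoneOn_of_hasDerivWithinAt_nonpos (convex_Icc a b)
      (fun t ht => (hH t (ha.trans_le ht.1)).continuousAt.continuousWithinAt)
      (fun t ht => (hH t ?_).hasDerivWithinAt) (fun t ht => ?_)
    all_goals rw [interior_Icc] at ht
    · exact ha.trans ht.1
    have ht0 : 0 < t := ha.trans ht.1
    have : C * b ^ (-β) ≤ C * t ^ (-β) :=
      mul_le_mul_of_nonneg_left (Real.rpow_le_rpow_of_nonpos ht0 ht.2.le (by linarith)) hC
    exact mul_nonpos_of_nonpos_of_nonneg (by linarith) (by positivity)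
  have := hanti ⟨le_rfl, hab⟩ ⟨hab, le_rfl⟩ hab
  simp only [H] at this
  linarith

end annulusTail

open Finset in
theorem RingRegulated.card_le {Φ : Set Plane} {σ ρ ν : ℝ} (hreg : RingRegulated Φ σ ρ ν)
    (hloc : ∀ R : ℝ, (Φ ∩ Metric.closedBall 0 R).Finite) {T : Finset Plane} {r t : ℝ}
    (hr : 0 ≤ r) (hrt : r < t) (hT : ∀ z ∈ T, z ∈ Φ ∧ r < ‖z‖ ∧ ‖z‖ ≤ t) :
    (#T : ℝ) ≤ σ + ρ * (t - r) + ν * (t ^ 2 - r ^ 2) := by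
  -- the closed annulus lies in every open annulus `r < ‖z‖ < t + ε`; then let `ε ↓ 0`
  let F : ℝ → ℝ := fun ε => σ + ρ * (t + ε - r) + ν * ((t + ε) ^ 2 - r ^ 2)
  have hF : ∀ ε > 0, (#T : ℝ) ≤ F ε := fun ε hε => by
    have hsub : (T : Set Plane) ⊆ Φ ∩ {z | r < ‖z‖ ∧ ‖z‖ < t + ε} := fun z hz => by
      obtain ⟨hzΦ, hrz, hzt⟩ := hT z hz
      exact ⟨hzΦ, hrz, by linarith⟩
    have hfin : (Φ ∩ {z : Plane | r < ‖z‖ ∧ ‖z‖ < t + ε}).Finite :=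
      (hloc (t + ε)).subset fun z hz => ⟨hz.1, mem_closedBall_zero_iff.2 hz.2.2.le⟩
    calc (#T : ℝ) ≤ (Φ ∩ {z : Plane | r < ‖z‖ ∧ ‖z‖ < t + ε}).ncard := by
          exact_mod_cast (ncard_coe_finset T).symm.trans_le (ncard_le_ncard hsub hfin)
      _ ≤ F ε := hreg r (t + ε) hr (by linarith)
  have hlim : Filter.Tendsto F (nhdsWithin 0 (Ioi 0)) (nhds (F 0)) :=
    ((by fun_prop : Continuous F).tendsto 0).mono_left nhdsWithin_le_nhds
  simpa [F] using ge_of_tendsto hlim (eventually_nhdsWithin_of_forall hF)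

open Finset in
theorem tailInterference_le {Φ : Set Plane} {σ ρ ν : ℝ} (hσ : 0 ≤ σ) (hρ : 0 ≤ ρ) (hν : 0 ≤ ν)
    (hloc : ∀ R : ℝ, (Φ ∩ Metric.closedBall 0 R).Finite) (hreg : RingRegulated Φ σ ρ ν)
    {ℓ : ℝ → ℝ} (hℓ0 : ∀ t, 0 ≤ ℓ t) {r : ℝ} (hr : 0 < r) (hℓanti : AntitoneOn ℓ (Ici r))
    {C β : ℝ} (hC : 0 ≤ C) (hβ : 2 < β) (hℓub : ∀ t, r ≤ t → ℓ t ≤ C * t ^ (-β)) :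
    tailInterference ℓ Φ r ≤ σ * ℓ r + annulusTail C β ρ ν r := by
  let F : ℝ → ℝ := fun t => σ + ρ * (t - r) + ν * (t ^ 2 - r ^ 2)
  refine tsum_le_of_sum_le'
    (add_nonneg (mul_nonneg hσ (hℓ0 r)) (annulusTail_nonneg hβ hC hρ hν hr)) fun S => ?_
  have hsum := sum_le_of_card_filter_le S (fun w => ‖(w : Plane)‖) hℓanti hℓ0 (F := F)
    (W := annulusTail C β ρ ν) (by simpa [F] using hσ)
    (fun t ht => annulusTail_nonneg hβ hC hρ hν (hr.trans_le ht))
    (fun a b ha hab => by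
      simp only [F]
      linear_combination mul_sub_le_annulusTail_sub hβ hC hρ hν (hr.trans_le ha) hab
        (hℓub b (ha.trans hab)))
    (fun w _ => w.2.2)
    (fun t ht => by
      rw [← card_map (Function.Embedding.subtype _)]
      refine hreg.card_le hloc hr.le ht fun z hz => ?_
      obtain ⟨w, hw, rfl⟩ := mem_map.1 hz
      exact ⟨w.2.1, w.2.2, (mem_filter.1 hw).2⟩)
  simpa [F] using hsum

theorem annulusTail_le_mul {C C' β ρ ν r L : ℝ} (hC' : 0 < C') (hC : 0 ≤ C) (hβ : 2 < β)
    (hρ : 0 ≤ ρ) (hν : 0 ≤ ν) (hr : 0 < r) (hL : C' * r ^ (-β) ≤ L) :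
    annulusTail C β ρ ν r
      ≤ L * ((C / C') * (ρ / (β - 1)) * r + (C / C') * (2 * ν / (β - 2)) * r ^ 2) := by
  have : 0 < β - 1 := by linarith
  have : 0 < β - 2 := by linarith
  have hX : 0 ≤ ρ / (β - 1) * r + 2 * ν / (β - 2) * r ^ 2 := by positivity
  calc annulusTail C β ρ ν r
      = C / C' * (C' * r ^ (-β)) * (ρ / (β - 1) * r + 2 * ν / (β - 2) * r ^ 2) := by
        rw [annulusTail_eq hr]; field_simp
    _ ≤ C / C' * L * (ρ / (β - 1) * r + 2 * ν / (β - 2) * r ^ 2) := by gcongr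
    _ = _ := by ring

section eta

variable {ℓ : ℝ → ℝ} {γ₀ σβ ρβ νβ : ℝ}

theorem eta_pos (hγ₀ : 0 < γ₀) (hσβ : 0 ≤ σβ) (hρβ : 0 ≤ ρβ) (hνβ : 0 ≤ νβ) {r : ℝ} (hr : 0 ≤ r)
    (hℓ : 0 < ℓ r) : 0 < eta ℓ γ₀ σβ ρβ νβ r := by
  unfold eta
  positivity

theorem eta_le_eta (hγ₀ : 0 < γ₀) (hσβ : 0 ≤ σβ) (hρβ : 0 ≤ ρβ) (hνβ : 0 ≤ νβ) {s t : ℝ}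
    (hs : 0 ≤ s) (hst : s ≤ t) (hℓs : 0 < ℓ s) (hℓt : 0 < ℓ t) (hℓ : ℓ t ≤ ℓ s) :
    eta ℓ γ₀ σβ ρβ νβ t ≤ eta ℓ γ₀ σβ ρβ νβ s := by
  unfold eta
  gcongr

theorem eta_le_SrINR (hγ₀ : 0 < γ₀) {Φ : Set Plane} {v : Plane} (hℓ : 0 < ℓ ‖v‖)
    (hI0 : 0 ≤ tailInterference ℓ Φ ‖v‖)
    (hI : tailInterference ℓ Φ ‖v‖ ≤ ℓ ‖v‖ * (σβ + ρβ * ‖v‖ + νβ * ‖v‖ ^ 2)) :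
    eta ℓ γ₀ σβ ρβ νβ ‖v‖ ≤ SrINR ℓ γ₀ Φ v := by
  have hD : 0 < ℓ ‖v‖ * (σβ + ρβ * ‖v‖ + νβ * ‖v‖ ^ 2) + γ₀ := by linarith
  have : eta ℓ γ₀ σβ ρβ νβ ‖v‖ = ℓ ‖v‖ / (ℓ ‖v‖ * (σβ + ρβ * ‖v‖ + νβ * ‖v‖ ^ 2) + γ₀) := by
    rw [eta]
    field_simp
    ring
  rw [this, SrINR]
  gcongr

end eta

theorem logb_le_rate {ℓ : ℝ → ℝ} {γ₀ η : ℝ} {Φ : Set Plane} {w : Plane} (hw : w ∈ Φ) (hη : 0 < η)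
    (hSrINR : ∀ v ∈ Φ, ‖v‖ ≤ ‖w‖ → η ≤ SrINR ℓ γ₀ Φ v) :
    Real.logb 2 (1 + η) ≤ rate ℓ γ₀ Φ w := by
  refine le_csInf ⟨_, mem_image_of_mem _ (⟨hw, le_rfl⟩ : w ∈ {v ∈ Φ | ‖v‖ ≤ ‖w‖})⟩ ?_
  rintro _ ⟨v, ⟨hv, hvw⟩, rfl⟩
  exact Real.logb_le_logb_of_le one_lt_two (by linarith) (by linarith [hSrINR v hv hvw])

theorem sicDelay_le {ℓ : ℝ → ℝ} {γ₀ m η : ℝ} (hm : 0 ≤ m) {Φ : Set Plane} {x : Plane} (hη : 0 < η)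
    (hSrINR : ∀ v ∈ Φ, ‖v‖ ≤ ‖x‖ → η ≤ SrINR ℓ γ₀ Φ v) :
    sicDelay ℓ γ₀ m Φ x ≤ m / Real.logb 2 (1 + η) := by
  have hL : 0 < Real.logb 2 (1 + η) := Real.logb_pos one_lt_two (by linarith)
  refine Real.sSup_le ?_ (div_nonneg hm hL.le)
  rintro _ ⟨w, ⟨hw, hwx⟩, rfl⟩
  exact div_le_div_of_nonneg_left hm hL
    (logb_le_rate hw hη fun v hv hvw => hSrINR v hv (hvw.trans hwx))

theorem stmt5_general (Φ : Set Plane) (σ ρ ν : ℝ)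
    (hσ : 0 ≤ σ) (hρ : 0 ≤ ρ) (hν : 0 ≤ ν)
    (hloc : ∀ R : ℝ, (Φ ∩ Metric.closedBall 0 R).Finite)
    (hreg : RingRegulated Φ σ ρ ν)
    (ℓ : ℝ → ℝ) (hℓ0 : ∀ r, 0 ≤ ℓ r)
    (hℓanti : AntitoneOn ℓ (Set.Ici 0))
    (C C' r₀ β : ℝ) (hC' : 0 < C') (hCC' : C' ≤ C) (hr₀ : 0 < r₀) (hβ : 2 < β)
    (hℓlb : ∀ r, r₀ < r → C' * r ^ (-β) ≤ ℓ r)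
    (hℓub : ∀ r, r₀ < r → ℓ r ≤ C * r ^ (-β))
    (hΦr₀ : ∀ w ∈ Φ, r₀ < ‖w‖)
    (γ₀ : ℝ) (hγ₀ : 0 < γ₀) (m : ℝ) (hm : 0 < m) :
    ∀ x ∈ Φ,
      sicDelay ℓ γ₀ m Φ x
        ≤ m / Real.logb 2
            (1 + eta ℓ γ₀ σ ((C / C') * (ρ / (β - 1))) ((C / C') * (2 * ν / (β - 2))) ‖x‖) := by
  intro x hx
  have hC : 0 ≤ C := hC'.le.trans hCC'
  have hβ1 : 0 < β - 1 := by linarith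
  have hβ2 : 0 < β - 2 := by linarith
  have hρβ : 0 ≤ (C / C') * (ρ / (β - 1)) := by positivity
  have hνβ : 0 ≤ (C / C') * (2 * ν / (β - 2)) := by positivity
  have hℓpos : ∀ t, r₀ < t → 0 < ℓ t := fun t ht =>
    (by have := hr₀.trans ht; positivity : 0 < C' * t ^ (-β)).trans_le (hℓlb t ht)
  have hI : ∀ v ∈ Φ, tailInterference ℓ Φ ‖v‖
      ≤ ℓ ‖v‖ * (σ + (C / C') * (ρ / (β - 1)) * ‖v‖ + (C / C') * (2 * ν / (β - 2)) * ‖v‖ ^ 2) := by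
    intro v hv
    have hrv := hΦr₀ v hv
    have hv0 := hr₀.trans hrv
    linear_combination
      tailInterference_le hσ hρ hν hloc hreg hℓ0 hv0 (hℓanti.mono (Ici_subset_Ici.2 hv0.le)) hC hβ
        (fun t ht => hℓub t (hrv.trans_le ht))
      + annulusTail_le_mul hC' hC hβ hρ hν hv0 (hℓlb _ hrv)
  have hℓx := hℓpos _ (hΦr₀ x hx)
  refine sicDelay_le hm.le (eta_pos hγ₀ hσ hρβ hνβ (norm_nonneg x) hℓx) fun v hv hvx => ?_
  have hℓv := hℓpos _ (hΦr₀ v hv)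
  exact (eta_le_eta hγ₀ hσ hρβ hνβ (norm_nonneg v) hvx hℓv hℓx
      (hℓanti (norm_nonneg v) (norm_nonneg x) hvx)).trans
    (eta_le_SrINR hγ₀ hℓv (tsum_nonneg fun _ => hℓ0 _) (hI v hv))

theorem stmt5 (Φ : Set Plane) (σ ρ ν : ℝ)
    (hσ : 0 ≤ σ) (hρ : 0 ≤ ρ) (hν : 0 ≤ ν)
    (hloc : ∀ R : ℝ, (Φ ∩ Metric.closedBall 0 R).Finite)
    (hreg : RingRegulated Φ σ ρ ν)
    (ℓ : ℝ → ℝ) (hℓ0 : ∀ r, 0 ≤ ℓ r)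
    (hℓanti : AntitoneOn ℓ (Set.Ici 0))
    (hℓbdd : BddAbove (ℓ '' Set.Ici 0))
    (C C' r₀ β : ℝ) (hC' : 0 < C') (hCC' : C' ≤ C) (hr₀ : 0 < r₀) (hβ : 2 < β)
    (hℓlb : ∀ r, r₀ < r → C' * r ^ (-β) ≤ ℓ r)
    (hℓub : ∀ r, r₀ < r → ℓ r ≤ C * r ^ (-β))
    (hΦr₀ : ∀ w ∈ Φ, r₀ < ‖w‖)
    (γ₀ : ℝ) (hγ₀ : 0 < γ₀) (m : ℝ) (hm : 0 < m) :
    ∀ x ∈ Φ,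
      sicDelay ℓ γ₀ m Φ x
        ≤ m / Real.logb 2
            (1 + eta ℓ γ₀ σ ((C / C') * (ρ / (β - 1))) ((C / C') * (2 * ν / (β - 2))) ‖x‖) :=
  stmt5_general Φ σ ρ ν hσ hρ hν hloc hreg ℓ hℓ0 hℓanti C C' r₀ β hC' hCC' hr₀ hβ hℓlb hℓub hΦr₀ γ₀
    hγ₀ m hm
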